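/- Matrix Hölder inequality for matrix-valued measures: let μ be a positive semidefinite matrix-valued measure on X with trace measure τ_μ and Radon–Nikodym matrix density M_μ (so dμ = M_μ dτ_μ, M_μ(z) positive semidefinite τ_μ-a.e.). For 1 < p < ∞ with conjugate exponent q and measurable ℂ^d-valued functions f, g, one has |∫_X ⟨M_μ(w)f(w), g(w)⟩ dτ_μ(w)| ≤ (∫_X ‖M_μ^{1/p}(w)f(w)‖^p dτ_μ(w))^{1/p} · (∫_X ‖M_μ^{1/q}(w)g(w)‖^q dτ_μ(w))^{1/q}. -/

import Mathlib

/-!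
Since the roots `M^{1/p}` and `M^{1/q}` are functions of one and the same spectral decomposition
of `M` (a function of a unitarily diagonalised matrix does not depend on the diagonalisation),
`M = M^{1/q} M^{1/p}` with `M^{1/q}` Hermitian. Hence `⟨M f, g⟩ = ⟨M^{1/p} f, M^{1/q} g⟩`, which
Cauchy–Schwarz bounds pointwise by `‖M^{1/p} f‖ ‖M^{1/q} g‖`; the scalar Hölder inequality
for these two nonnegative functions finishes the proof.
-/

set_option autoImplicit false

open MeasureTheory ComplexOrder

noncomputable section

/-- The inner product `⟨v, w⟩ = ∑ vᵢ conj(wᵢ)` on `ℂ^d`. -/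
def einner {d : ℕ} (v w : Fin d → ℂ) : ℂ := ∑ i, v i * (starRingEnd ℂ) (w i)

/-- The Euclidean norm on `ℂ^d`. -/
def enorm2 {d : ℕ} (v : Fin d → ℂ) : ℝ := Real.sqrt (∑ i, ‖v i‖ ^ 2)

/-- `SpectralPow A r B` : `B = A^r` via a spectral decomposition of the
positive semidefinite matrix `A`. -/
def SpectralPow {d : ℕ} (A : Matrix (Fin d) (Fin d) ℂ) (r : ℝ)
    (B : Matrix (Fin d) (Fin d) ℂ) : Prop :=
  ∃ (U : Matrix (Fin d) (Fin d) ℂ) (lam : Fin d → ℝ),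
    star U * U = 1 ∧ U * star U = 1 ∧ (∀ i, 0 ≤ lam i) ∧
    A = star U * Matrix.diagonal (fun i => ((lam i : ℂ))) * U ∧
    B = star U * Matrix.diagonal (fun i => ((lam i ^ r : ℝ) : ℂ)) * U

open Matrix

namespace Matrix

variable {m n R : Type*} [DecidableEq m] [DecidableEq n] [Fintype m] [Fintype n]

lemma mul_diagonal_comp_eq_diagonal_comp_mul [CommRing R] [IsDomain R] {W : Matrix m n R}
    {a : n → R} {b : m → R} (h : W * diagonal a = diagonal b * W) (φ : R → R) :
    W * diagonal (φ ∘ a) = diagonal (φ ∘ b) * W := by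
  ext i j
  have hij : W i j * a j = b i * W i j := by
    simpa [mul_diagonal, diagonal_mul] using congrFun (congrFun h i) j
  rw [mul_diagonal, diagonal_mul, Function.comp_apply, Function.comp_apply]
  rcases eq_or_ne (W i j) 0 with hW | hW
  · simp [hW]
  · rw [mul_comm (b i)] at hij
    rw [mul_left_cancel₀ hW hij, mul_comm]

lemma star_mul_diagonal_comp_mul_eq [CommRing R] [StarRing R] [IsDomain R] {U V : Matrix n n R}
    (hU : U ∈ unitary (Matrix n n R)) (hV : V ∈ unitary (Matrix n n R)) {a b : n → R}
    (h : star U * diagonal a * U = star V * diagonal b * V) (φ : R → R) :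
    star U * diagonal (φ ∘ a) * U = star V * diagonal (φ ∘ b) * V := by
  have hU1 : star U * U = 1 := Unitary.star_mul_self_of_mem hU
  have hU2 : U * star U = 1 := Unitary.mul_star_self_of_mem hU
  have hV1 : star V * V = 1 := Unitary.star_mul_self_of_mem hV
  have hV2 : V * star V = 1 := Unitary.mul_star_self_of_mem hV
  have hW : (V * star U) * diagonal a = diagonal b * (V * star U) :=
    calc V * star U * diagonal a = V * (star U * diagonal a * U) * star U := by
          simp only [Matrix.mul_assoc, hU2, Matrix.mul_one]
      _ = V * star V * diagonal b * (V * star U) := by rw [h]; simp only [Matrix.mul_assoc]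
      _ = diagonal b * (V * star U) := by rw [hV2, Matrix.one_mul]
  calc star U * diagonal (φ ∘ a) * U
      = star V * ((V * star U) * diagonal (φ ∘ a)) * U := by
        simp only [← Matrix.mul_assoc, hV1, Matrix.one_mul]
    _ = star V * diagonal (φ ∘ b) * V * (star U * U) := by
        rw [mul_diagonal_comp_eq_diagonal_comp_mul hW]; simp only [Matrix.mul_assoc]
    _ = star V * diagonal (φ ∘ b) * V := by rw [hU1, Matrix.mul_one]

end Matrix

lemma Unitary.star_mul_mul_star_mul_mul {R : Type*} [Monoid R] [StarMul R] {U : R}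
    (hU : U ∈ unitary R) (a b : R) : star U * a * U * (star U * b * U) = star U * (a * b) * U := by
  simp only [mul_assoc, Unitary.mul_star_self_of_mem hU, ← mul_assoc U, one_mul]

namespace SpectralPow

variable {d : ℕ} {A B C : Matrix (Fin d) (Fin d) ℂ} {r s : ℝ}

lemma mul (hB : SpectralPow A r B) (hC : SpectralPow A s C) (hrs : r + s ≠ 0) :
    SpectralPow A (r + s) (B * C) := by
  obtain ⟨U, lam, hU1, hU2, hlam, hAU, rfl⟩ := hB
  obtain ⟨V, mu, hV1, hV2, -, hAV, rfl⟩ := hC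
  have hU : U ∈ unitary _ := ⟨hU1, hU2⟩
  have hCU : star V * diagonal (fun i => ((mu i ^ s : ℝ) : ℂ)) * V =
      star U * diagonal (fun i => ((lam i ^ s : ℝ) : ℂ)) * U :=
    (star_mul_diagonal_comp_mul_eq hU ⟨hV1, hV2⟩ (hAU.symm.trans hAV)
      (fun z : ℂ => ((z.re ^ s : ℝ) : ℂ))).symm
  refine ⟨U, lam, hU1, hU2, hlam, hAU, ?_⟩
  rw [hCU, Unitary.star_mul_mul_star_mul_mul hU, diagonal_mul_diagonal]
  simp only [Real.rpow_add' (hlam _) hrs, Complex.ofReal_mul]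

lemma eq_of_one (hB : SpectralPow A 1 B) : B = A := by
  obtain ⟨U, lam, -, -, -, rfl, rfl⟩ := hB
  simp only [Real.rpow_one]

end SpectralPow

lemma einner_eq_inner {d : ℕ} (v w : Fin d → ℂ) :
    einner v w = inner ℂ (WithLp.toLp 2 w) (WithLp.toLp 2 v) := rfl

lemma enorm2_eq_norm {d : ℕ} (v : Fin d → ℂ) : enorm2 v = ‖WithLp.toLp 2 v‖ :=
  (EuclideanSpace.norm_eq _).symm

lemma norm_einner_le {d : ℕ} (v w : Fin d → ℂ) : ‖einner v w‖ ≤ enorm2 v * enorm2 w := by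
  rw [einner_eq_inner, enorm2_eq_norm, enorm2_eq_norm, mul_comm]
  exact norm_inner_le_norm _ _

lemma einner_mulVec_of_isHermitian {d : ℕ} {N : Matrix (Fin d) (Fin d) ℂ} (hN : N.IsHermitian)
    (v w : Fin d → ℂ) : einner (N *ᵥ v) w = einner v (N *ᵥ w) :=
  ((isSymmetric_toEuclideanLin_iff.mpr hN) (WithLp.toLp 2 w) (WithLp.toLp 2 v)).symm

lemma norm_einner_mulVec_le {d : ℕ} {A B C : Matrix (Fin d) (Fin d) ℂ} {r s : ℝ}
    (hB : SpectralPow A r B) (hC : SpectralPow A s C) (hC' : C.IsHermitian) (hrs : r + s = 1)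
    (v w : Fin d → ℂ) : ‖einner (A *ᵥ v) w‖ ≤ enorm2 (B *ᵥ v) * enorm2 (C *ᵥ w) := by
  have hA : C * B = A := by
    have hCB := hC.mul hB (by linarith)
    rw [add_comm, hrs] at hCB
    exact hCB.eq_of_one
  rw [← hA, ← mulVec_mulVec, einner_mulVec_of_isHermitian hC']
  exact norm_einner_le _ _

section Holder

variable {X : Type*} [MeasurableSpace X] {τ : Measure X}

lemma memLp_ofReal_of_integrable_rpow {F : X → ℝ} {p : ℝ} (hp : 0 < p) (hF : ∀ x, 0 ≤ F x)
    (h : Integrable (fun x => F x ^ p) τ) : MemLp F (ENNReal.ofReal p) τ := by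
  have hmeas : AEStronglyMeasurable F τ := by
    have := h.aemeasurable.pow_const p⁻¹
    simp only [Real.rpow_rpow_inv (hF _) hp.ne'] at this
    exact this.aestronglyMeasurable
  refine (integrable_norm_rpow_iff hmeas (by simpa using hp) ENNReal.ofReal_ne_top).mp ?_
  simpa only [ENNReal.toReal_ofReal hp.le, Real.norm_of_nonneg (hF _)] using h

lemma norm_integral_le_Lp_mul_Lq_of_norm_le_mul {E : Type*} [NormedAddCommGroup E]
    [NormedSpace ℝ E] {φ : X → E} {F G : X → ℝ} {p q : ℝ} (hpq : p.HolderConjugate q)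
    (hF : ∀ x, 0 ≤ F x) (hG : ∀ x, 0 ≤ G x)
    (hFp : Integrable (fun x => F x ^ p) τ) (hGq : Integrable (fun x => G x ^ q) τ)
    (hφ : ∀ᵐ x ∂τ, ‖φ x‖ ≤ F x * G x) :
    ‖∫ x, φ x ∂τ‖ ≤ (∫ x, F x ^ p ∂τ) ^ (1 / p) * (∫ x, G x ^ q ∂τ) ^ (1 / q) := by
  have hF' := memLp_ofReal_of_integrable_rpow hpq.pos hF hFp
  have hG' := memLp_ofReal_of_integrable_rpow hpq.symm.pos hG hGq
  have := hpq.ennrealOfReal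
  calc ‖∫ x, φ x ∂τ‖
      ≤ ∫ x, F x * G x ∂τ := norm_integral_le_of_norm_le (hF'.integrable_mul hG') hφ
    _ ≤ _ := integral_mul_le_Lp_mul_Lq_of_nonneg hpq (.of_forall hF) (.of_forall hG) hF' hG'

end Holder

/-- `τ` is the trace measure `τ_μ`, `M` the density `dμ/dτ_μ`, and `Mp`, `Mq` are the roots
`M^{1/p}`, `M^{1/q}`. -/
theorem matrix_holder_inequality_general
    (d : ℕ) (X : Type*) [MeasurableSpace X] (τ : Measure X)
    (M Mp Mq : X → Matrix (Fin d) (Fin d) ℂ)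
    (p q : ℝ) (hp : 1 < p) (hpq : 1 / p + 1 / q = 1)
    (hMp : ∀ᵐ w ∂τ, (Mp w).PosSemidef ∧ SpectralPow (M w) (1 / p) (Mp w))
    (hMq : ∀ᵐ w ∂τ, (Mq w).PosSemidef ∧ SpectralPow (M w) (1 / q) (Mq w))
    (f g : X → Fin d → ℂ)
    (hintf : Integrable (fun w => enorm2 ((Mp w).mulVec (f w)) ^ p) τ)
    (hintg : Integrable (fun w => enorm2 ((Mq w).mulVec (g w)) ^ q) τ) :
    ‖∫ w, einner ((M w).mulVec (f w)) (g w) ∂τ‖ ≤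
      (∫ w, enorm2 ((Mp w).mulVec (f w)) ^ p ∂τ) ^ (1 / p) *
        (∫ w, enorm2 ((Mq w).mulVec (g w)) ^ q ∂τ) ^ (1 / q) := by
  have hpq' : p.HolderConjugate q :=
    Real.holderConjugate_iff.mpr ⟨hp, by simpa only [one_div] using hpq⟩
  refine norm_integral_le_Lp_mul_Lq_of_norm_le_mul hpq' (fun _ => Real.sqrt_nonneg _)
    (fun _ => Real.sqrt_nonneg _) hintf hintg ?_
  filter_upwards [hMp, hMq] with w hMpw hMqw
  exact norm_einner_mulVec_le hMpw.2 hMqw.2 hMqw.1.isHermitian hpq (f w) (g w)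

/-- Matrix Hölder inequality for matrix-valued measures.  Here `τ` plays the
role of the trace measure `τ_μ`, `M` is the Radon–Nikodym matrix density
(`dμ = M dτ`, positive semidefinite a.e.), and `Mp`, `Mq` are the positive
semidefinite roots `M^{1/p}`, `M^{1/q}`.  For conjugate exponents
`1 < p, q < ∞` and `ℂ^d`-valued `f, g`:
`|∫ ⟨M f, g⟩ dτ| ≤ (∫ ‖M^{1/p} f‖^p dτ)^{1/p} (∫ ‖M^{1/q} g‖^q dτ)^{1/q}`. -/
theorem matrix_holder_inequality
    (d : ℕ) (X : Type*) [MeasurableSpace X] (τ : Measure X)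
    (M Mp Mq : X → Matrix (Fin d) (Fin d) ℂ)
    (p q : ℝ) (hp : 1 < p) (hpq : 1 / p + 1 / q = 1)
    (hM : ∀ᵐ w ∂τ, (M w).PosSemidef)
    (hMp : ∀ᵐ w ∂τ, (Mp w).PosSemidef ∧ SpectralPow (M w) (1 / p) (Mp w))
    (hMq : ∀ᵐ w ∂τ, (Mq w).PosSemidef ∧ SpectralPow (M w) (1 / q) (Mq w))
    (f g : X → Fin d → ℂ)
    (hint : Integrable (fun w => einner ((M w).mulVec (f w)) (g w)) τ)
    (hintf : Integrable (fun w => enorm2 ((Mp w).mulVec (f w)) ^ p) τ)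
    (hintg : Integrable (fun w => enorm2 ((Mq w).mulVec (g w)) ^ q) τ) :
    ‖∫ w, einner ((M w).mulVec (f w)) (g w) ∂τ‖ ≤
      (∫ w, enorm2 ((Mp w).mulVec (f w)) ^ p ∂τ) ^ (1 / p) *
        (∫ w, enorm2 ((Mq w).mulVec (g w)) ^ q ∂τ) ^ (1 / q) :=
  matrix_holder_inequality_general d X τ M Mp Mq p q hp hpq hMp hMq f g hintf hintg
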